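/- arXiv:2104.08616 — 3 statements merged into one kernel-verified Lean document; each statement's English description precedes it below -/
import Mathlib

section
/- Let G be an edge-periodic graph on n vertices with global period LCM. If the cop has a winning strategy in the cops-and-robber game on G, then the cop has a strategy catching the robber within n^2 * LCM rounds, regardless of the robber's play. -/
namespace EPG

/-- Presence of the edge `{u,v}` at time `t`: the binary string `τ u v` (the empty
string encodes a non-edge) has a `1` at position `t mod |τ u v|`. -/
def present {V : Type*} (τ : V → V → List Bool) (u v : V) (t : ℕ) : Prop :=
  (τ u v).getD (t % (τ u v).length) false = true

/-- A legal move at time `t`: stay, or cross an edge present at time `t`. -/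
def moveOK {V : Type*} (τ : V → V → List Bool) (t : ℕ) (u v : V) : Prop :=
  v = u ∨ present τ u v t

/-- A (Markov) strategy: given the time and both current positions, produce the
mover's next vertex. -/
abbrev Strat (V : Type*) := ℕ → V → V → V

/-- A cop strategy is valid if it always prescribes legal moves. -/
def copValid {V : Type*} (τ : V → V → List Bool) (σ : Strat V) : Prop :=
  ∀ t u r, moveOK τ t u (σ t u r)

/-- A robber strategy is valid if it always prescribes legal moves. -/
def robValid {V : Type*} (τ : V → V → List Bool) (σ : Strat V) : Prop :=
  ∀ t c r, moveOK τ t r (σ t c r)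

/-- The pair of positions (cop, robber) at the beginning of round `t`, given start
vertices `c0, r0` and strategies `σc, σr`; in each round the cop moves first,
then the robber (seeing the cop's new position). -/
def pos {V : Type*} (σc σr : Strat V) (c0 r0 : V) : ℕ → V × V
  | 0 => (c0, r0)
  | t + 1 =>
      let p := pos σc σr c0 r0 t
      let c' := σc t p.1 p.2
      (c', σr t c' p.2)

/-- The cop catches the robber within the first `N` rounds: either the robber starts
on the cop's vertex, or in some round `t < N` the cop's move lands on the robber. -/
def caughtBy {V : Type*} (σc σr : Strat V) (c0 r0 : V) (N : ℕ) : Prop :=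
  c0 = r0 ∨ ∃ t < N,
    σc t (pos σc σr c0 r0 t).1 (pos σc σr c0 r0 t).2 = (pos σc σr c0 r0 t).2

/-- The cop eventually catches the robber. -/
def caught {V : Type*} (σc σr : Strat V) (c0 r0 : V) : Prop :=
  c0 = r0 ∨ ∃ t,
    σc t (pos σc σr c0 r0 t).1 (pos σc σr c0 r0 t).2 = (pos σc σr c0 r0 t).2

/-- The edge-periodic graph is cop-winning: the cop has a start vertex and a valid
strategy catching every robber. -/
def copWinning {V : Type*} (τ : V → V → List Bool) : Prop :=
  ∃ c0 σc, copValid τ σc ∧ ∀ r0 σr, robValid τ σr → caught σc σr c0 r0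

/-- The edge-periodic graph is robber-winning: against every cop start vertex and valid
cop strategy, the robber has a start vertex and valid strategy evading forever. -/
def robberWinning {V : Type*} (τ : V → V → List Bool) : Prop :=
  ∀ c0 σc, copValid τ σc → ∃ r0 σr, robValid τ σr ∧ ¬ caught σc σr c0 r0

/-- The least common multiple of the lengths of the edge strings. -/
def lcmLen {V : Type*} [Fintype V] [DecidableEq V] (τ : V → V → List Bool) : ℕ :=
  ((Finset.univ : Finset (V × V)).filter fun p => τ p.1 p.2 ≠ []).lcm
    fun p => (τ p.1 p.2).length

end EPG

/-
A configuration is a cop position, a robber position and a time, with the cop to move, and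
`CopWinsIn move k` is the set of configurations from which the cop forces a capture within `k`
rounds (the `k`-th stage of the cop's attractor). If the initial configuration lay in no stage,
the robber could stay outside the attractor forever, so against a cop-winning graph it lies in
some stage. Since the edges are `L`-periodic, membership in a stage depends on the time only
modulo `L`; the increasing sequence of stages therefore lives in a set of `n²L` elements and
stops growing after at most `n²L` steps, at which point it is constant. The cop who always
moves so as to decrease the least stage containing the configuration then catches the robber
within `n²L` rounds.
-/

theorem Finset.exists_le_card_eq_succ_of_monotone {α : Type*} [Fintype α]
    {f : ℕ → Finset α} (hf : Monotone f) : ∃ k ≤ Fintype.card α, f k = f (k + 1) := by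
  by_contra! hgrow
  have hcard : ∀ k ≤ Fintype.card α + 1, k ≤ (f k).card := by
    intro k
    induction k with
    | zero => simp
    | succ k ih =>
      intro hk
      have hlt :=
        Finset.card_lt_card ((hf (Nat.le_add_right k 1)).ssubset_of_ne (hgrow k (by omega)))
      have := ih (by omega)
      omega
  have := (hcard _ le_rfl).trans (Finset.card_le_univ _)
  omega

namespace EPG

section Game

variable {V : Type*} (move : ℕ → V → V → Prop)

def CopWinsIn : ℕ → V → V → ℕ → Prop
  | 0, _, _, _ => False
  | k + 1, c, r, t => ∃ c', move t c c' ∧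
      (c' = r ∨ ∀ r', move t r r' → CopWinsIn k c' r' (t + 1))

variable {move}

theorem CopWinsIn.succ {k : ℕ} {c r : V} {t : ℕ} (h : CopWinsIn move k c r t) :
    CopWinsIn move (k + 1) c r t := by
  induction k generalizing c r t with
  | zero => exact h.elim
  | succ k ih =>
    obtain ⟨c', hc', hnext⟩ := h
    exact ⟨c', hc', hnext.imp_right fun hall r' hr' => ih (hall r' hr')⟩

theorem CopWinsIn.mono {k j : ℕ} {c r : V} {t : ℕ} (hkj : k ≤ j)
    (h : CopWinsIn move k c r t) : CopWinsIn move j c r t := by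
  induction j, hkj using Nat.le_induction with
  | base => exact h
  | succ j _ ih => exact ih.succ

theorem CopWinsIn.exists_move {k : ℕ} {c r : V} {t : ℕ} (h : CopWinsIn move k c r t) :
    ∃ c', move t c c' ∧
      (c' = r ∨ ∀ r', move t r r' → CopWinsIn move (k - 1) c' r' (t + 1)) := by
  cases k with
  | zero => exact h.elim
  | succ k => exact h

theorem copWinsIn_add_period {L : ℕ} (hper : ∀ t u v, move (t + L) u v ↔ move t u v)
    (k : ℕ) (c r : V) (t : ℕ) : CopWinsIn move k c r (t + L) ↔ CopWinsIn move k c r t := by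
  induction k generalizing c r t with
  | zero => rfl
  | succ k ih =>
    simp only [CopWinsIn, hper, Nat.add_right_comm t L 1, ih]

theorem copWinsIn_mod {L : ℕ} (hper : ∀ t u v, move (t + L) u v ↔ move t u v)
    (k : ℕ) (c r : V) (t : ℕ) : CopWinsIn move k c r (t % L) ↔ CopWinsIn move k c r t :=
  iff_of_eq <| Function.Periodic.map_mod_nat
    (fun t => propext (copWinsIn_add_period hper k c r t)) t

end Game

section Escape

variable {V : Type*} {move : ℕ → V → V → Prop}

variable (move) in
open Classical in
noncomputable def escape (t : ℕ) (c r : V) : V :=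
  if h : ∃ r', move t r r' ∧ ∀ k, ¬ CopWinsIn move k c r' (t + 1) then h.choose else r

theorem move_escape (hstay : ∀ t v, move t v v) (t : ℕ) (c r : V) :
    move t r (escape move t c r) := by
  unfold escape
  split_ifs with h
  · exact h.choose_spec.1
  · exact hstay t r

theorem not_copWinsIn_escape {t : ℕ} {c r : V}
    (h : ∃ r', move t r r' ∧ ∀ k, ¬ CopWinsIn move k c r' (t + 1)) (k : ℕ) :
    ¬ CopWinsIn move k c (escape move t c r) (t + 1) := by
  rw [escape, dif_pos h]
  exact h.choose_spec.2 k

theorem exists_escape_of_not_copWinsIn [Finite V] {t : ℕ} {c c' r : V} (hc : move t c c')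
    (hlose : ∀ k, ¬ CopWinsIn move k c r t) :
    c' ≠ r ∧ ∃ r', move t r r' ∧ ∀ k, ¬ CopWinsIn move k c' r' (t + 1) := by
  refine ⟨fun hcatch => hlose 1 ⟨c', hc, .inl hcatch⟩, ?_⟩
  by_contra! hwin
  have hbound : ∀ r', ∃ k, move t r r' → CopWinsIn move k c' r' (t + 1) := fun r' => by
    by_cases hr' : move t r r'
    · obtain ⟨k, hk⟩ := hwin r' hr'
      exact ⟨k, fun _ => hk⟩
    · exact ⟨0, fun h => absurd h hr'⟩
  choose g hg using hbound
  obtain ⟨K, hK⟩ := Finite.exists_le g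
  exact hlose (K + 1) ⟨c', hc, .inr fun r' hr' => (hg r' hr').mono (hK r')⟩

theorem not_caught_escape [Finite V] (hstay : ∀ t v, move t v v) {σc : Strat V}
    (hσc : ∀ t c r, move t c (σc t c r)) {c0 r0 : V} (h0 : ∀ k, ¬ CopWinsIn move k c0 r0 0) :
    ¬ caught σc (escape move) c0 r0 := by
  set p := pos σc (escape move) c0 r0
  have hout : ∀ t k, ¬ CopWinsIn move k (p t).1 (p t).2 t := by
    intro t
    induction t with
    | zero => exact h0
    | succ t ih =>
      exact not_copWinsIn_escape (exists_escape_of_not_copWinsIn (hσc t _ _) ih).2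
  rintro (hcatch | ⟨t, hcatch⟩)
  · exact h0 1 ⟨c0, hstay 0 c0, .inl hcatch⟩
  · exact (exists_escape_of_not_copWinsIn (hσc t _ _) (hout t)).1 hcatch

theorem exists_copWinsIn_of_forall_caught [Finite V] (hstay : ∀ t v, move t v v)
    {σc : Strat V} (hσc : ∀ t c r, move t c (σc t c r)) {c0 : V}
    (hcatch : ∀ r0 σr, (∀ t c r, move t r (σr t c r)) → caught σc σr c0 r0) (r0 : V) :
    ∃ k, CopWinsIn move k c0 r0 0 := by
  by_contra! h
  exact not_caught_escape hstay hσc h (hcatch r0 _ (move_escape hstay))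

end Escape

section Pursuit

variable {V : Type*} {move : ℕ → V → V → Prop}

variable (move) in
open Classical in
noncomputable def pursue (t : ℕ) (c r : V) : V :=
  if h : ∃ k, CopWinsIn move k c r t then (Nat.find_spec h).exists_move.choose else c

open Classical in
theorem move_pursue (hstay : ∀ t v, move t v v) (t : ℕ) (c r : V) :
    move t c (pursue move t c r) := by
  unfold pursue
  split_ifs with h
  · exact (Nat.find_spec h).exists_move.choose_spec.1
  · exact hstay t c

open Classical in
theorem pursue_eq_or_copWinsIn {k t : ℕ} {c r : V} (h : CopWinsIn move k c r t) :
    pursue move t c r = r ∨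
      ∀ r', move t r r' → CopWinsIn move (k - 1) (pursue move t c r) r' (t + 1) := by
  have hex : ∃ k, CopWinsIn move k c r t := ⟨k, h⟩
  have hmin : Nat.find hex ≤ k := Nat.find_min' hex h
  rw [pursue, dif_pos hex]
  exact (Nat.find_spec hex).exists_move.choose_spec.2.imp_right
    fun hall r' hr' => (hall r' hr').mono (by omega)

theorem exists_catch_pursue {σr : Strat V} (hσr : ∀ t c r, move t r (σr t c r)) {c0 r0 : V}
    (k t : ℕ) (h : CopWinsIn move k (pos (pursue move) σr c0 r0 t).1
      (pos (pursue move) σr c0 r0 t).2 t) :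
    ∃ s < t + k, pursue move s (pos (pursue move) σr c0 r0 s).1
      (pos (pursue move) σr c0 r0 s).2 = (pos (pursue move) σr c0 r0 s).2 := by
  induction k generalizing t with
  | zero => exact h.elim
  | succ k ih =>
    rcases pursue_eq_or_copWinsIn h with hcatch | hnext
    · exact ⟨t, by omega, hcatch⟩
    · obtain ⟨s, hs, hcatch⟩ := ih (t + 1) (hnext _ (hσr _ _ _))
      exact ⟨s, by omega, hcatch⟩

theorem caughtBy_pursue {σr : Strat V} (hσr : ∀ t c r, move t r (σr t c r)) {k : ℕ}
    {c0 r0 : V} (h : CopWinsIn move k c0 r0 0) : caughtBy (pursue move) σr c0 r0 k := by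
  obtain ⟨s, hs, hcatch⟩ := exists_catch_pursue hσr k 0 h
  exact .inr ⟨s, by omega, hcatch⟩

end Pursuit

section Periodic

variable {V : Type*} {move : ℕ → V → V → Prop}

theorem copWinsIn_of_succ_imp {k₀ : ℕ}
    (hstab : ∀ c r t, CopWinsIn move (k₀ + 1) c r t → CopWinsIn move k₀ c r t)
    {k : ℕ} (hk : k₀ ≤ k) {c r : V} {t : ℕ} (h : CopWinsIn move k c r t) :
    CopWinsIn move k₀ c r t := by
  induction k, hk using Nat.le_induction generalizing c r t with
  | base => exact h
  | succ k _ ih =>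
    obtain ⟨c', hc', hnext⟩ := h
    exact hstab c r t ⟨c', hc', hnext.imp_right fun hall r' hr' => ih (hall r' hr')⟩

theorem exists_copWinsIn_succ_imp [Fintype V] {L : ℕ} (hL : 0 < L)
    (hper : ∀ t u v, move (t + L) u v ↔ move t u v) :
    ∃ k₀ ≤ Fintype.card V ^ 2 * L,
      ∀ c r t, CopWinsIn move (k₀ + 1) c r t → CopWinsIn move k₀ c r t := by
  classical
  let stage (k : ℕ) : Finset (V × V × Fin L) :=
    {q | CopWinsIn move k q.1 q.2.1 q.2.2}
  have hmono : Monotone stage := fun k j hkj q hq => by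
    simp only [stage, Finset.mem_filter, Finset.mem_univ, true_and] at hq ⊢
    exact hq.mono hkj
  obtain ⟨k₀, hk₀, hstab⟩ := Finset.exists_le_card_eq_succ_of_monotone hmono
  refine ⟨k₀, hk₀.trans_eq ?_, fun c r t h => ?_⟩
  · simp only [Fintype.card_prod, Fintype.card_fin]
    ring
  · rw [← copWinsIn_mod hper] at h ⊢
    have hmem : (c, r, (⟨t % L, Nat.mod_lt t hL⟩ : Fin L)) ∈ stage (k₀ + 1) := by
      simpa [stage] using h
    rw [← hstab] at hmem
    simpa [stage] using hmem

theorem CopWinsIn.card_sq_mul [Fintype V] {L : ℕ} (hL : 0 < L)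
    (hper : ∀ t u v, move (t + L) u v ↔ move t u v) {k : ℕ} {c r : V} {t : ℕ}
    (h : CopWinsIn move k c r t) : CopWinsIn move (Fintype.card V ^ 2 * L) c r t := by
  obtain ⟨k₀, hk₀, hstab⟩ := exists_copWinsIn_succ_imp hL hper
  rcases le_total k k₀ with hk | hk
  · exact (h.mono hk).mono hk₀
  · exact (copWinsIn_of_succ_imp hstab hk h).mono hk₀

end Periodic

section EdgePeriodic

variable {V : Type*} (τ : V → V → List Bool)

theorem moveOK_self (t : ℕ) (v : V) : moveOK τ t v v := .inl rfl

variable [Fintype V] [DecidableEq V]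

theorem length_dvd_lcmLen {u v : V} (h : τ u v ≠ []) : (τ u v).length ∣ lcmLen τ :=
  Finset.dvd_lcm (Finset.mem_filter.mpr ⟨Finset.mem_univ (u, v), h⟩)

theorem lcmLen_pos : 0 < lcmLen τ := by
  rw [lcmLen, Nat.pos_iff_ne_zero, Ne, Finset.lcm_eq_zero_iff]
  rintro ⟨⟨u, v⟩, hmem, hzero⟩
  exact (Finset.mem_filter.mp hmem).2 (List.length_eq_zero_iff.mp hzero)

theorem moveOK_add_lcmLen (t : ℕ) (u v : V) :
    moveOK τ (t + lcmLen τ) u v ↔ moveOK τ t u v := by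
  refine or_congr Iff.rfl ?_
  unfold present
  by_cases h : τ u v = []
  · simp [h]
  · rw [Nat.add_mod, Nat.mod_eq_zero_of_dvd (length_dvd_lcmLen τ h), add_zero, Nat.mod_mod]

end EdgePeriodic

end EPG

open EPG in
theorem stmt_7_general {V : Type*} [Fintype V] [DecidableEq V] (τ : V → V → List Bool)
    (n L : ℕ) (hn : n = Fintype.card V) (hL : L = lcmLen τ)
    (hwin : copWinning τ) :
    ∃ c0 σc, copValid τ σc ∧
      ∀ r0 σr, robValid τ σr → caughtBy σc σr c0 r0 (n ^ 2 * L) := by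
  obtain ⟨c0, σc, hσc, hcatch⟩ := hwin
  refine ⟨c0, pursue (moveOK τ), move_pursue (moveOK_self τ), fun r0 σr hσr => ?_⟩
  obtain ⟨k, hk⟩ := exists_copWinsIn_of_forall_caught (moveOK_self τ) hσc hcatch r0
  subst hn hL
  exact caughtBy_pursue hσr (hk.card_sq_mul (lcmLen_pos τ) (moveOK_add_lcmLen τ))

open EPG in
/-- If a cop-winning edge-periodic graph on `n` vertices with global period `LCM`
is cop-winning, then the cop has a valid strategy catching the robber within
`n^2 * LCM` rounds, regardless of the robber's play. -/
theorem stmt_7 {V : Type*} [Fintype V] [DecidableEq V] (τ : V → V → List Bool)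
    (hsymm : ∀ u v, τ u v = τ v u)
    (hwf : ∀ u v, τ u v ≠ [] → true ∈ τ u v)
    (n L : ℕ) (hn : n = Fintype.card V) (hL : L = lcmLen τ)
    (hwin : copWinning τ) :
    ∃ c0 σc, copValid τ σc ∧
      ∀ r0 σr, robValid τ σr → caughtBy σc σr c0 r0 (n ^ 2 * L) :=
  stmt_7_general τ n L hn hL hwin
end

section
/- Let x_j be a binary string and τ_j = ξ(x_j[0])·...·ξ(x_j[|x_j|−1]) with ξ(c) = c^m 0 1^(m+1) and q = 2m+2. Then for every time t: (1) if t mod q ≤ m−1 then τ_j[t mod |τ_j|] = x_j[⌊t/q⌋ mod |x_j|]; (2) if t mod q = m then τ_j[t mod |τ_j|] = 0; (3) if t mod q ≥ m+1 then τ_j[t mod |τ_j|] = 1. -/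
/-- The gadget block `ξ(c) = c^m 0 1^(m+1)` of length `q = 2m+2`. -/
def xiBlock (m : ℕ) (c : Bool) : List Bool :=
  List.replicate m c ++ [false] ++ List.replicate (m + 1) true

/-- The block encoding `ξ(x[0]) ⋯ ξ(x[|x|-1])` of a binary string `x`. -/
def encode (m : ℕ) (x : List Bool) : List Bool := (x.map (xiBlock m)).flatten

/-!
Reading a concatenation of blocks of common length `q` cyclically, position `t` lies in block
`⌊t/q⌋ mod |x|` at offset `t mod q`, because `t mod (q |x|) = t mod q + q (⌊t/q⌋ mod |x|)`.
The claim then reduces to reading the single block `ξ(c)` at an offset below `q`.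
-/

namespace List

variable {α β : Type*} {n : ℕ} {f : β → List α}

theorem length_flatten_map_of_length_eq (hf : ∀ b, (f b).length = n) (x : List β) :
    (x.map f).flatten.length = n * x.length := by
  simp [Function.comp_def, hf, Nat.mul_comm]

theorem getElem?_flatten_map_of_length_eq (hf : ∀ b, (f b).length = n) {x : List β} {i r : ℕ}
    (hi : i < x.length) (hr : r < n) :
    (x.map f).flatten[n * i + r]? = (f x[i])[r]? := by
  induction x generalizing i with
  | nil => simp at hi
  | cons b x ih =>
    cases i with
    | zero => simp [getElem?_append_left, hf, hr]
    | succ i =>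
      have hshift : n * (i + 1) + r - n = n * i + r := by rw [Nat.mul_succ]; omega
      rw [map_cons, flatten_cons, getElem?_append_right (by rw [hf, Nat.mul_succ]; omega), hf,
        hshift, ih (by simpa using hi), getElem_cons_succ]

end List

section Encoding

variable (m : ℕ)

theorem xiBlock_length (c : Bool) : (xiBlock m c).length = 2 * m + 2 := by
  simp only [xiBlock, List.length_append, List.length_replicate, List.length_singleton]; omega

theorem encode_getD_mod {x : List Bool} (hx : x ≠ []) (t : ℕ) :
    (encode m x).getD (t % (encode m x).length) false =
      (xiBlock m (x.getD (t / (2 * m + 2) % x.length) false)).getD (t % (2 * m + 2)) false := by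
  have hi : t / (2 * m + 2) % x.length < x.length := Nat.mod_lt _ (List.length_pos_iff.mpr hx)
  rw [encode, List.length_flatten_map_of_length_eq (xiBlock_length m), Nat.mod_mul,
    Nat.add_comm, List.getD_eq_getElem?_getD,
    List.getElem?_flatten_map_of_length_eq (xiBlock_length m) hi (Nat.mod_lt _ (by omega)),
    List.getD_eq_getElem _ _ hi, List.getD_eq_getElem?_getD]

variable {m} (c : Bool)

theorem xiBlock_getD_of_lt {r : ℕ} (hr : r < m) : (xiBlock m c).getD r false = c := by
  rw [xiBlock, List.getD_append _ _ _ _ (by simp; omega), List.getD_append _ _ _ _ (by simpa),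
    List.getD_replicate _ hr]

theorem xiBlock_getD_self : (xiBlock m c).getD m false = false := by
  simp [xiBlock]

theorem xiBlock_getD_of_le {r : ℕ} (hr : m + 1 ≤ r) (hr' : r < 2 * m + 2) :
    (xiBlock m c).getD r false = true := by
  rw [xiBlock, List.getD_append_right _ _ _ _ (by simpa), List.getD_replicate _ (by simp; omega)]

end Encoding

/-- Block-encoding correctness for the directed-cycle reduction (`q = 2m+2`): at any
time `t`, reading `τ_j = encode m x_j` cyclically gives `x_j[⌊t/q⌋ mod |x_j|]` if
`t mod q ≤ m−1`, gives `0` if `t mod q = m`, and gives `1` if `t mod q ≥ m+1`. -/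
theorem stmt_15 (m : ℕ) (x : List Bool) (hx : x ≠ []) (t : ℕ) :
    (t % (2 * m + 2) < m →
      (encode m x).getD (t % (encode m x).length) false =
        x.getD ((t / (2 * m + 2)) % x.length) false) ∧
    (t % (2 * m + 2) = m →
      (encode m x).getD (t % (encode m x).length) false = false) ∧
    (m + 1 ≤ t % (2 * m + 2) →
      (encode m x).getD (t % (encode m x).length) false = true) := by
  rw [encode_getD_mod m hx]
  refine ⟨xiBlock_getD_of_lt _, fun h => by rw [h]; exact xiBlock_getD_self _, fun h => ?_⟩
  exact xiBlock_getD_of_le _ h (Nat.mod_lt _ (by omega))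
end

section
/- Let G be an edge-periodic graph on n vertices with global period LCM. Deciding whether G is cop-winning can be reduced to deciding reachability for the existential player in an AND-OR graph with at most 2·n²·LCM vertices; consequently, if the winning region of this AND-OR game is computable, cop-winning of G is decidable. -/
namespace EPG

/-- Time advances by one, modulo the global period. -/
def nextT {L : ℕ} (t : Fin L) : Fin L :=
  ⟨(t.val + 1) % L, Nat.mod_lt _ ((Nat.zero_le _).trans_lt t.isLt)⟩

/-- The attractor (winning region of the existential player) of the target set
`{(u_c, u_r, s, t) | u_c = u_r}` in the AND-OR configuration graph of the
cops-and-robber game: OR-nodes are cop-to-move configurations and AND-nodes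
robber-to-move configurations; after the robber's move time advances modulo `L`. -/
inductive Attr {V : Type*} (τ : V → V → List Bool) {L : ℕ} :
    V × V × Bool × Fin L → Prop
  | capture (uc : V) (s : Bool) (t : Fin L) : Attr τ (uc, uc, s, t)
  | copMove (uc uc' ur : V) (t : Fin L) : moveOK τ t.val uc uc' →
      Attr τ (uc', ur, false, t) → Attr τ (uc, ur, true, t)
  | robMove (uc ur : V) (t : Fin L) :
      (∀ ur', moveOK τ t.val ur ur' → Attr τ (uc, ur', true, nextT t)) →
      Attr τ (uc, ur, false, t)

end EPG


/-!
Since `L` is a common multiple of all edge periods, a move is legal at time `t` iff it is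
legal at time `t mod L`, so plays of the game are walks in the finite configuration graph.
On a finite graph the attractor is the union of its finite ranks. From a cop node in the
attractor the cop moves to a robber node of least rank; every robber answer then lowers
the rank, so the robber is caught. From a cop node outside the attractor, every cop move
leads to a robber node outside it, which has a robber move back to a cop node outside it;
this invariant keeps the robber free forever.
-/

namespace EPG

open Fin.NatCast

variable {V : Type*} {τ : V → V → List Bool} {L : ℕ}

def IsCommonPeriod (τ : V → V → List Bool) (L : ℕ) : Prop :=
  ∀ u v, τ u v ≠ [] → (τ u v).length ∣ L

theorem isCommonPeriod_lcmLen [Fintype V] [DecidableEq V] (τ : V → V → List Bool) :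
    IsCommonPeriod τ (lcmLen τ) :=
  fun u v h => Finset.dvd_lcm (Finset.mem_filter.mpr ⟨Finset.mem_univ (u, v), h⟩)

namespace IsCommonPeriod

theorem present_mod (hL : IsCommonPeriod τ L) (u v : V) (t : ℕ) :
    present τ u v (t % L) ↔ present τ u v t := by
  by_cases h : τ u v = []
  · simp [present, h]
  · rw [present, present, Nat.mod_mod_of_dvd t (hL u v h)]

theorem moveOK_natCast [NeZero L] (hL : IsCommonPeriod τ L) (t : ℕ) (u v : V) :
    moveOK τ (t : Fin L) u v ↔ moveOK τ t u v := by
  rw [moveOK, moveOK, Fin.val_natCast, hL.present_mod]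

end IsCommonPeriod

theorem nextT_natCast [NeZero L] (t : ℕ) : nextT (t : Fin L) = ((t + 1 : ℕ) : Fin L) :=
  Fin.ext <| by simp only [nextT, Fin.val_natCast, Nat.mod_add_mod]

/-- The attractor stratified by rank: from these configurations the cop forces the target
within `k` moves of the configuration graph. -/
inductive AttrWithin (τ : V → V → List Bool) {L : ℕ} : ℕ → V × V × Bool × Fin L → Prop
  | capture (k : ℕ) (uc : V) (s : Bool) (t : Fin L) : AttrWithin τ k (uc, uc, s, t)
  | copMove (k : ℕ) (uc uc' ur : V) (t : Fin L) : moveOK τ t.val uc uc' →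
      AttrWithin τ k (uc', ur, false, t) → AttrWithin τ (k + 1) (uc, ur, true, t)
  | robMove (k : ℕ) (uc ur : V) (t : Fin L) :
      (∀ ur', moveOK τ t.val ur ur' → AttrWithin τ k (uc, ur', true, nextT t)) →
      AttrWithin τ (k + 1) (uc, ur, false, t)

namespace AttrWithin

theorem mono {k m : ℕ} {x : V × V × Bool × Fin L} (h : AttrWithin τ k x) (hkm : k ≤ m) :
    AttrWithin τ m x := by
  induction h generalizing m with
  | capture => exact capture ..
  | copMove k uc uc' ur t hmove _ ih =>
    cases m with
    | zero => omega
    | succ m => exact copMove m uc uc' ur t hmove (ih (by omega))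
  | robMove k uc ur t _ ih =>
    cases m with
    | zero => omega
    | succ m => exact robMove m uc ur t fun ur' hr => ih ur' hr (by omega)

/-- Staying put covers the case `uc = ur`. -/
theorem exists_copMove {k : ℕ} {uc ur : V} {t : Fin L}
    (h : AttrWithin τ k (uc, ur, true, t)) :
    ∃ uc', moveOK τ t.val uc uc' ∧ AttrWithin τ k (uc', ur, false, t) := by
  cases h with
  | capture => exact ⟨uc, Or.inl rfl, capture ..⟩
  | copMove k _ uc' _ _ hmove h => exact ⟨uc', hmove, h.mono k.le_succ⟩

theorem exists_lt_of_robNode {k : ℕ} {uc ur : V} {t : Fin L}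
    (h : AttrWithin τ k (uc, ur, false, t)) (hne : uc ≠ ur) :
    ∃ j < k, ∀ ur', moveOK τ t.val ur ur' → AttrWithin τ j (uc, ur', true, nextT t) := by
  cases h with
  | capture => exact absurd rfl hne
  | robMove j _ _ _ h => exact ⟨j, j.lt_succ_self, h⟩

end AttrWithin

theorem Attr.exists_attrWithin [Finite V] {x : V × V × Bool × Fin L} (h : Attr τ x) :
    ∃ k, AttrWithin τ k x := by
  induction h with
  | capture uc s t => exact ⟨0, .capture 0 uc s t⟩
  | copMove uc uc' ur t hmove _ ih =>
    obtain ⟨k, hk⟩ := ih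
    exact ⟨k + 1, .copMove k uc uc' ur t hmove hk⟩
  | robMove uc ur t _ ih =>
    have hall : ∀ᶠ k in Filter.atTop, ∀ ur', moveOK τ t.val ur ur' →
        AttrWithin τ k (uc, ur', true, nextT t) :=
      Filter.eventually_all.2 fun ur' => Filter.eventually_imp_distrib_left.2 fun hr =>
        let ⟨k, hk⟩ := ih ur' hr
        (Filter.eventually_ge_atTop k).mono fun _ hm => hk.mono hm
    obtain ⟨k, hk⟩ := hall.exists
    exact ⟨k + 1, .robMove k uc ur t hk⟩

theorem exists_robMove_not_attr {uc ur : V} {t : Fin L} (h : ¬ Attr τ (uc, ur, false, t)) :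
    ∃ ur', moveOK τ t.val ur ur' ∧ ¬ Attr τ (uc, ur', true, nextT t) := by
  by_contra! hall
  exact h (.robMove uc ur t hall)

/-- The cop moves to a robber node of least rank. -/
noncomputable def copStrat (τ : V → V → List Bool) (L : ℕ) [NeZero L] : Strat V :=
  open Classical in fun t c r =>
    if h : ∃ k c', moveOK τ t c c' ∧ AttrWithin τ k (c', r, false, (t : Fin L))
    then (Nat.find_spec h).choose else c

theorem copStrat_spec [NeZero L] {t k : ℕ} {c r c' : V} (hmove : moveOK τ t c c')
    (hc' : AttrWithin τ k (c', r, false, (t : Fin L))) :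
    moveOK τ t c (copStrat τ L t c r) ∧
      ∃ j ≤ k, AttrWithin τ j (copStrat τ L t c r, r, false, (t : Fin L)) := by
  classical
  have h : ∃ k c', moveOK τ t c c' ∧ AttrWithin τ k (c', r, false, (t : Fin L)) :=
    ⟨k, c', hmove, hc'⟩
  have hspec := (Nat.find_spec h).choose_spec
  have hval : copStrat τ L t c r = (Nat.find_spec h).choose := by
    simp only [copStrat]
    rw [dif_pos h]
  rw [hval]
  exact ⟨hspec.1, Nat.find h, Nat.find_min' h ⟨c', hmove, hc'⟩, hspec.2⟩

theorem copStrat_valid [NeZero L] : copValid τ (copStrat τ L) := by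
  intro t c r
  by_cases h : ∃ k c', moveOK τ t c c' ∧ AttrWithin τ k (c', r, false, (t : Fin L))
  · obtain ⟨k, c', hmove, hc'⟩ := h
    exact (copStrat_spec hmove hc').1
  · simp only [copStrat, dif_neg h]
    exact Or.inl rfl

/-- Induction on the rank: each round of `copStrat` strictly decreases it until capture. -/
theorem exists_capture_copStrat [NeZero L] (hL : IsCommonPeriod τ L) {σr : Strat V}
    (hσr : robValid τ σr) {c0 r0 : V} (N t : ℕ)
    (hN : AttrWithin τ N ((pos (copStrat τ L) σr c0 r0 t).1,
      (pos (copStrat τ L) σr c0 r0 t).2, true, (t : Fin L))) :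
    ∃ t', copStrat τ L t' (pos (copStrat τ L) σr c0 r0 t').1 (pos (copStrat τ L) σr c0 r0 t').2
      = (pos (copStrat τ L) σr c0 r0 t').2 := by
  induction N using Nat.strong_induction_on generalizing t with
  | _ N ih =>
    set c := (pos (copStrat τ L) σr c0 r0 t).1
    set r := (pos (copStrat τ L) σr c0 r0 t).2
    obtain ⟨c', hmove, hc'⟩ := hN.exists_copMove
    obtain ⟨-, j, hjN, hj⟩ := copStrat_spec ((hL.moveOK_natCast t c c').1 hmove) hc'
    by_cases hcap : copStrat τ L t c r = r
    · exact ⟨t, hcap⟩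
    obtain ⟨i, hij, hi⟩ := hj.exists_lt_of_robNode hcap
    refine ih i (by omega) (t + 1) ?_
    rw [← nextT_natCast]
    exact hi _ ((hL.moveOK_natCast t r _).2 (hσr t _ r))

theorem caught_copStrat [Finite V] [NeZero L] (hL : IsCommonPeriod τ L) {σr : Strat V}
    (hσr : robValid τ σr) {c0 r0 : V} (h : Attr τ (c0, r0, true, (0 : Fin L))) :
    caught (copStrat τ L) σr c0 r0 :=
  let ⟨N, hN⟩ := h.exists_attrWithin
  Or.inr (exists_capture_copStrat hL hσr N 0 (by rwa [Nat.cast_zero]))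

/-- The robber moves to a cop node outside the attractor whenever there is one. -/
noncomputable def robStrat (τ : V → V → List Bool) (L : ℕ) [NeZero L] : Strat V :=
  open Classical in fun t c r =>
    if h : ∃ r', moveOK τ t r r' ∧ ¬ Attr τ (c, r', true, ((t + 1 : ℕ) : Fin L))
    then h.choose else r

theorem robStrat_valid [NeZero L] : robValid τ (robStrat τ L) := by
  intro t c r
  by_cases h : ∃ r', moveOK τ t r r' ∧ ¬ Attr τ (c, r', true, ((t + 1 : ℕ) : Fin L))
  · simp only [robStrat, dif_pos h]
    exact h.choose_spec.1
  · simp only [robStrat, dif_neg h]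
    exact Or.inl rfl

theorem not_attr_pos_robStrat [NeZero L] (hL : IsCommonPeriod τ L) {σc : Strat V}
    (hσc : copValid τ σc) {c0 r0 : V} (h0 : ¬ Attr τ (c0, r0, true, (0 : Fin L)))
    (t : ℕ) :
    ¬ Attr τ ((pos σc (robStrat τ L) c0 r0 t).1, (pos σc (robStrat τ L) c0 r0 t).2, true,
      (t : Fin L)) := by
  induction t with
  | zero => rwa [Nat.cast_zero]
  | succ t ih =>
    set c := (pos σc (robStrat τ L) c0 r0 t).1
    set r := (pos σc (robStrat τ L) c0 r0 t).2
    have hrob : ¬ Attr τ (σc t c r, r, false, (t : Fin L)) := fun hA =>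
      ih (.copMove c _ r _ ((hL.moveOK_natCast t c _).2 (hσc t c r)) hA)
    obtain ⟨r', hmove, hr'⟩ := exists_robMove_not_attr hrob
    rw [nextT_natCast] at hr'
    have h : ∃ r', moveOK τ t r r' ∧ ¬ Attr τ (σc t c r, r', true, ((t + 1 : ℕ) : Fin L)) :=
      ⟨r', (hL.moveOK_natCast t r r').1 hmove, hr'⟩
    show ¬ Attr τ (σc t c r, robStrat τ L t (σc t c r) r, true, ((t + 1 : ℕ) : Fin L))
    simp only [robStrat, dif_pos h]
    exact h.choose_spec.2

theorem not_caught_robStrat [NeZero L] (hL : IsCommonPeriod τ L) {σc : Strat V}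
    (hσc : copValid τ σc) {c0 r0 : V} (h0 : ¬ Attr τ (c0, r0, true, (0 : Fin L))) :
    ¬ caught σc (robStrat τ L) c0 r0 := by
  rintro (rfl | ⟨t, ht⟩)
  · exact h0 (.capture ..)
  · set c := (pos σc (robStrat τ L) c0 r0 t).1
    set r := (pos σc (robStrat τ L) c0 r0 t).2
    apply not_attr_pos_robStrat hL hσc h0 t
    refine .copMove c _ r _ ((hL.moveOK_natCast t c _).2 (hσc t c r)) ?_
    rw [ht]
    exact .capture ..

end EPG

open EPG in
theorem stmt_18_general {V : Type*} [Fintype V] [DecidableEq V] (τ : V → V → List Bool)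
    (n L : ℕ) (hn : n = Fintype.card V) (hL : L = lcmLen τ) (hLpos : 0 < L) :
    Fintype.card (V × V × Bool × Fin L) = 2 * n ^ 2 * L ∧
      (copWinning τ ↔ ∃ uc : V, ∀ ur : V, Attr τ (uc, ur, true, ⟨0, hLpos⟩)) := by
  have : NeZero L := ⟨hLpos.ne'⟩
  have hper : IsCommonPeriod τ L := hL ▸ isCommonPeriod_lcmLen τ
  have hzero : (⟨0, hLpos⟩ : Fin L) = 0 := Fin.ext (by simp)
  refine ⟨by simp [hn]; ring, ⟨?_, ?_⟩⟩
  · rintro ⟨c0, σc, hσc, hwin⟩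
    refine ⟨c0, fun r0 => hzero ▸ ?_⟩
    by_contra h0
    exact not_caught_robStrat hper hσc h0 (hwin r0 _ robStrat_valid)
  · rintro ⟨c0, hc0⟩
    exact ⟨c0, copStrat τ L, copStrat_valid, fun r0 σr hσr =>
      caught_copStrat hper hσr (hzero ▸ hc0 r0)⟩

open EPG in
/-- Cop-winning of an edge-periodic graph on `n` vertices with global period `L` reduces
to AND-OR graph reachability on the configuration graph, which has exactly
`2·n²·L` vertices: the graph is cop-winning iff some cop start vertex `u_c` has all
configurations `(u_c, u_r, cop, 0)` in the attractor of the target set. -/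
theorem stmt_18 {V : Type*} [Fintype V] [DecidableEq V] (τ : V → V → List Bool)
    (hsymm : ∀ u v, τ u v = τ v u)
    (hwf : ∀ u v, τ u v ≠ [] → true ∈ τ u v)
    (n L : ℕ) (hn : n = Fintype.card V) (hL : L = lcmLen τ) (hLpos : 0 < L) :
    Fintype.card (V × V × Bool × Fin L) = 2 * n ^ 2 * L ∧
      (copWinning τ ↔ ∃ uc : V, ∀ ur : V, Attr τ (uc, ur, true, ⟨0, hLpos⟩)) :=
  stmt_18_general τ n L hn hL hLpos
end
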